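/- 𝔯, 𝔡 ≤ 𝔯_simult: every witness family for 𝔯_simult has cardinality at least the reaping number 𝔯 and at least the dominating number 𝔡. -/

import Mathlib

/-!
A family `F` witnessing `𝔯_simult` yields a reaping family `{B 0 | B ∈ F}`: test `F` on the
constant sequence `A n = x` (or `A n = ω ∖ x` when `x` is finite). It also yields a family
`{n ↦ min (B n) | B ∈ F}` dominating every `x : ω → ω`: test `F` on `A n = [x n, ∞)`, where
the first alternative is impossible because `B 0` is infinite.
-/

open Cardinal

/-- `B` reaps `X`: `B ⊆* X` or `B ⊆* ω ∖ X`. -/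
def Reaps (B X : Set ℕ) : Prop := (B \ X).Finite ∨ (B ∩ X).Finite

/-- The cardinal 𝔯_simult. -/
noncomputable def rSimult : Cardinal :=
  sInf { c | ∃ F : Set (ℕ → Set ℕ),
    (∀ B ∈ F, ∀ n, (B n).Infinite) ∧
    (∀ A : ℕ → Set ℕ, (∀ n, (A n).Infinite) →
      ∃ B ∈ F, (∃ n, B 0 ⊆ (A n)ᶜ) ∨ (∀ n, B n ⊆ A n)) ∧
    #F = c }

/-- The reaping number 𝔯. -/
noncomputable def frakR : Cardinal :=
  sInf { c | ∃ R : Set (Set ℕ), (∀ B ∈ R, B.Infinite) ∧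
    (∀ x : Set ℕ, ∃ B ∈ R, Reaps B x) ∧ #R = c }

/-- The dominating number 𝔡 (w.r.t. eventual domination `≤*`). -/
noncomputable def frakD : Cardinal :=
  sInf { c | ∃ D : Set (ℕ → ℕ),
    (∀ x : ℕ → ℕ, ∃ y ∈ D, ∀ᶠ n in Filter.atTop, x n ≤ y n) ∧ #D = c }

structure IsSimultReaping (F : Set (ℕ → Set ℕ)) : Prop where
  infinite : ∀ B ∈ F, ∀ n, (B n).Infinite
  simult : ∀ A : ℕ → Set ℕ, (∀ n, (A n).Infinite) →
    ∃ B ∈ F, (∃ n, B 0 ⊆ (A n)ᶜ) ∨ (∀ n, B n ⊆ A n)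

theorem le_rSimult {c : Cardinal} (h : ∀ F, IsSimultReaping F → c ≤ #F) : c ≤ rSimult := by
  refine le_csInf ⟨_, {B | ∀ n, (B n).Infinite}, fun B hB => hB,
    fun A hA => ⟨A, hA, Or.inr fun _ => subset_rfl⟩, rfl⟩ ?_
  rintro c ⟨F, hinf, hsimult, rfl⟩
  exact h F ⟨hinf, hsimult⟩

theorem frakR_le_mk {R : Set (Set ℕ)} (hinf : ∀ B ∈ R, B.Infinite)
    (hR : ∀ x, ∃ B ∈ R, Reaps B x) : frakR ≤ #R :=
  csInf_le' ⟨R, hinf, hR, rfl⟩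

theorem frakD_le_mk {D : Set (ℕ → ℕ)}
    (hD : ∀ x : ℕ → ℕ, ∃ y ∈ D, ∀ᶠ n in Filter.atTop, x n ≤ y n) : frakD ≤ #D :=
  csInf_le' ⟨D, hD, rfl⟩

theorem reaps_of_subset {B x : Set ℕ} (h : B ⊆ x) : Reaps B x :=
  Or.inl <| Set.finite_empty.subset fun _ hm => hm.2 (h hm.1)

theorem reaps_of_subset_compl {B x : Set ℕ} (h : B ⊆ xᶜ) : Reaps B x :=
  Or.inr <| Set.finite_empty.subset fun _ hm => h hm.1 hm.2

theorem reaps_compl_iff {B x : Set ℕ} : Reaps B xᶜ ↔ Reaps B x := by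
  rw [Reaps, Reaps, Set.sdiff_compl, Set.sdiff_eq, or_comm]

namespace IsSimultReaping

variable {F : Set (ℕ → Set ℕ)} (hF : IsSimultReaping F)
include hF

theorem exists_reaps_of_infinite {x : Set ℕ} (hx : x.Infinite) : ∃ B ∈ F, Reaps (B 0) x := by
  obtain ⟨B, hB, ⟨_, hcompl⟩ | hsub⟩ := hF.simult (fun _ => x) fun _ => hx
  · exact ⟨B, hB, reaps_of_subset_compl hcompl⟩
  · exact ⟨B, hB, reaps_of_subset (hsub 0)⟩

theorem exists_reaps (x : Set ℕ) : ∃ B ∈ F, Reaps (B 0) x := by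
  rcases x.finite_or_infinite with hx | hx
  · obtain ⟨B, hB, h⟩ := hF.exists_reaps_of_infinite hx.infinite_compl
    exact ⟨B, hB, reaps_compl_iff.mp h⟩
  · exact hF.exists_reaps_of_infinite hx

theorem frakR_le : frakR ≤ #F := by
  refine (frakR_le_mk (R := (fun B => B 0) '' F) ?_ ?_).trans mk_image_le
  · rintro _ ⟨B, hB, rfl⟩
    exact hF.infinite B hB 0
  · intro x
    obtain ⟨B, hB, h⟩ := hF.exists_reaps x
    exact ⟨B 0, ⟨B, hB, rfl⟩, h⟩

theorem exists_le_sInf (x : ℕ → ℕ) : ∃ B ∈ F, ∀ n, x n ≤ sInf (B n) := by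
  obtain ⟨B, hB, ⟨n, hcompl⟩ | hsub⟩ :=
    hF.simult (fun n => Set.Ici (x n)) fun n => Set.Ici_infinite _
  · rw [Set.compl_Ici] at hcompl
    exact absurd ((Set.finite_Iio _).subset hcompl) (hF.infinite B hB 0)
  · exact ⟨B, hB, fun n => hsub n (Nat.sInf_mem (hF.infinite B hB n).nonempty)⟩

theorem frakD_le : frakD ≤ #F := by
  refine (frakD_le_mk (D := (fun B n => sInf (B n)) '' F) fun x => ?_).trans mk_image_le
  obtain ⟨B, hB, h⟩ := hF.exists_le_sInf x
  exact ⟨_, ⟨B, hB, rfl⟩, Filter.Eventually.of_forall h⟩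

end IsSimultReaping

theorem stmt9 : frakR ≤ rSimult ∧ frakD ≤ rSimult :=
  ⟨le_rSimult fun _ hF => hF.frakR_le, le_rSimult fun _ hF => hF.frakD_le⟩
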